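/- Equivalence of outcome-bridge and treatment-bridge plug-in functionals when both observed integral equations hold exactly (Supplement S5): Let Y be a real random variable taking finitely many values. Suppose (i) h : 𝒲 × 𝒳 → ℝ satisfies E[ Y | Z = z, X = x, R = 1 ] = E[ h(W, X) | Z = z, X = x, R = 1 ] for every (z, x) with P(Z = z, X = x, R = 1) > 0; (ii) P(W = w, X = x, R = 1) > 0 for every (w, x) with P(W = w, X = x) > 0, and q : 𝒵 × 𝒳 → ℝ satisfies P(R = 0 | W = w, X = x) = P(R = 1 | W = w, X = x)·E[ q(Z, X) | W = w, X = x, R = 1 ] for every such (w, x). Then E[ 1(R = 1)·Y·q(Z, X) ] = E[ 1(R = 0)·h(W, X) ]. -/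
import Mathlib


open Finset

noncomputable section

open scoped Classical

variable {Ω : Type*} [Fintype Ω]

/-- Probability of an event `A` under the weight function `p`. -/
def pr (p : Ω → ℝ) (A : Ω → Prop) : ℝ := ∑ ω, if A ω then p ω else 0

/-- Expectation of a real random variable `Y` under the weight function `p`. -/
def ex (p : Ω → ℝ) (Y : Ω → ℝ) : ℝ := ∑ ω, p ω * Y ω

/-- Conditional probability `P(A | B)`. -/
def cpr (p : Ω → ℝ) (A B : Ω → Prop) : ℝ := pr p (fun ω => A ω ∧ B ω) / pr p B

/-- Conditional expectation `E[Y | B]`. -/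
def cex (p : Ω → ℝ) (Y : Ω → ℝ) (B : Ω → Prop) : ℝ :=
  (∑ ω, if B ω then p ω * Y ω else 0) / pr p B

lemma sum_ite_congr'' (B1 B2 : Ω → Prop) {i1 : ∀ ω, Decidable (B1 ω)}
    {i2 : ∀ ω, Decidable (B2 ω)}
    (g1 g2 : Ω → ℝ) (hB : ∀ ω, B1 ω ↔ B2 ω) (hg : ∀ ω, B1 ω → g1 ω = g2 ω) :
    ∑ ω, (@ite ℝ (B1 ω) (i1 ω) (g1 ω) 0) = ∑ ω, (@ite ℝ (B2 ω) (i2 ω) (g2 ω) 0) := by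
  refine Finset.sum_congr rfl fun ω _ => ?_
  by_cases h1 : B1 ω
  · rw [if_pos h1, if_pos ((hB ω).mp h1), hg ω h1]
  · rw [if_neg h1, if_neg (fun h2 => h1 ((hB ω).mpr h2))]

lemma pr_congr' (p : Ω → ℝ) (B1 B2 : Ω → Prop) (hB : ∀ ω, B1 ω ↔ B2 ω) :
    pr p B1 = pr p B2 :=
  sum_ite_congr'' B1 B2 p p hB (fun _ _ => rfl)

lemma pr_nonneg' (p : Ω → ℝ) (hp : ∀ ω, 0 ≤ p ω) (B : Ω → Prop) : 0 ≤ pr p B :=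
  Finset.sum_nonneg fun ω _ => by split <;> simp [hp ω]

lemma pr_zero_forall (p : Ω → ℝ) (hp : ∀ ω, 0 ≤ p ω) (B : Ω → Prop)
    (hB : pr p B = 0) : ∀ ω, B ω → p ω = 0 := by
  intro ω hω
  have h0 := (Finset.sum_eq_zero_iff_of_nonneg
    (fun ω _ => by split <;> simp [hp ω])).mp hB ω (Finset.mem_univ ω)
  simpa [hω] using h0

lemma fiber_if' {𝒜 ℬ : Type*} [Fintype 𝒜] [Fintype ℬ]
    (A : Ω → 𝒜) (Xf : Ω → ℬ) (C : Ω → Prop) [DecidablePred C]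
    (g : Ω → ℝ) (c : 𝒜 → ℬ → ℝ) :
    ∑ ω, (if C ω then g ω * c (A ω) (Xf ω) else 0)
      = ∑ ab : 𝒜 × ℬ, (∑ ω, if A ω = ab.1 ∧ Xf ω = ab.2 ∧ C ω then g ω else 0) * c ab.1 ab.2 := by
  have h1 : ∀ ab : 𝒜 × ℬ,
      (∑ ω, if A ω = ab.1 ∧ Xf ω = ab.2 ∧ C ω then g ω else 0) * c ab.1 ab.2
        = ∑ ω, if A ω = ab.1 ∧ Xf ω = ab.2 ∧ C ω then g ω * c ab.1 ab.2 else 0 := by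
    intro ab; rw [Finset.sum_mul]; exact Finset.sum_congr rfl fun ω _ => by split <;> simp
  rw [Finset.sum_congr rfl fun ab _ => h1 ab, Finset.sum_comm]
  refine Finset.sum_congr rfl fun ω _ => ?_
  by_cases hC : C ω
  · simp [Fintype.sum_prod_type, hC, ite_and, Finset.sum_ite_eq]
  · simp [hC]

/-- Equivalence of outcome-bridge and treatment-bridge plug-in functionals when both
observed integral equations hold exactly (Supplement S5). -/
theorem bridge_plugin_equivalence
    {𝒳 𝒵 𝒲 : Type*} [Fintype 𝒳] [Fintype 𝒵] [Fintype 𝒲]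
    (p : Ω → ℝ) (hp : ∀ ω, 0 ≤ p ω) (hp1 : ∑ ω, p ω = 1)
    (R : Ω → Bool) (X : Ω → 𝒳) (Z : Ω → 𝒵) (W : Ω → 𝒲)
    (Y : Ω → ℝ) (h : 𝒲 → 𝒳 → ℝ) (q : 𝒵 → 𝒳 → ℝ)
    -- (i) observed outcome bridge equation
    (hh : ∀ (z : 𝒵) (x : 𝒳), 0 < pr p (fun ω => Z ω = z ∧ X ω = x ∧ R ω = true) →
      cex p Y (fun ω => Z ω = z ∧ X ω = x ∧ R ω = true)
        = cex p (fun ω => h (W ω) (X ω)) (fun ω => Z ω = z ∧ X ω = x ∧ R ω = true))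
    -- (ii) positivity and observed treatment bridge equation
    (hWpos : ∀ (w : 𝒲) (x : 𝒳), 0 < pr p (fun ω => W ω = w ∧ X ω = x) →
      0 < pr p (fun ω => W ω = w ∧ X ω = x ∧ R ω = true))
    (hq : ∀ (w : 𝒲) (x : 𝒳), 0 < pr p (fun ω => W ω = w ∧ X ω = x) →
      cpr p (fun ω => R ω = false) (fun ω => W ω = w ∧ X ω = x)
        = cpr p (fun ω => R ω = true) (fun ω => W ω = w ∧ X ω = x)
          * cex p (fun ω => q (Z ω) (X ω)) (fun ω => W ω = w ∧ X ω = x ∧ R ω = true)) :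
    ex p (fun ω => (if R ω = true then (1 : ℝ) else 0) * Y ω * q (Z ω) (X ω))
      = ex p (fun ω => (if R ω = false then (1 : ℝ) else 0) * h (W ω) (X ω)) := by
  have key1 : ∀ (z : 𝒵) (x : 𝒳),
      (∑ ω, if Z ω = z ∧ X ω = x ∧ R ω = true then p ω * Y ω else 0)
        = ∑ ω, if Z ω = z ∧ X ω = x ∧ R ω = true then p ω * h (W ω) (X ω) else 0 := by
    intro z x
    rcases (pr_nonneg' p hp (fun ω => Z ω = z ∧ X ω = x ∧ R ω = true)).lt_or_eq with hpos | hz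
    · have heq := hh z x hpos
      unfold cex at heq
      rw [div_eq_div_iff (ne_of_gt hpos) (ne_of_gt hpos)] at heq
      have h3 := mul_right_cancel₀ (ne_of_gt hpos) heq
      exact (sum_ite_congr'' _ _ _ _ (fun ω => Iff.rfl) (fun ω _ => rfl)).trans
        (h3.trans (sum_ite_congr'' _ _ _ _ (fun ω => Iff.rfl) (fun ω _ => rfl)))
    · have h0 := pr_zero_forall p hp _ hz.symm
      have e : ∀ (f : Ω → ℝ),
          (∑ ω, if Z ω = z ∧ X ω = x ∧ R ω = true then p ω * f ω else 0) = 0 := by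
        intro f
        refine Finset.sum_eq_zero fun ω _ => ?_
        by_cases hB : Z ω = z ∧ X ω = x ∧ R ω = true
        · simp [hB, h0 ω hB]
        · simp [hB]
      rw [e Y, e (fun ω => h (W ω) (X ω))]
  have key2 : ∀ (w : 𝒲) (x : 𝒳),
      (∑ ω, if W ω = w ∧ X ω = x ∧ R ω = true then p ω * q (Z ω) (X ω) else 0)
        = ∑ ω, if W ω = w ∧ X ω = x ∧ R ω = false then p ω else 0 := by
    intro w x
    rcases (pr_nonneg' p hp (fun ω => W ω = w ∧ X ω = x)).lt_or_eq with hpos | hz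
    · have hpos1 := hWpos w x hpos
      have heq := hq w x hpos
      unfold cpr cex at heq
      have e2 : pr p (fun ω => R ω = true ∧ (W ω = w ∧ X ω = x))
          = pr p (fun ω => W ω = w ∧ X ω = x ∧ R ω = true) :=
        pr_congr' p _ _ (fun ω => by tauto)
      have e1 : pr p (fun ω => R ω = false ∧ (W ω = w ∧ X ω = x))
          = pr p (fun ω => W ω = w ∧ X ω = x ∧ R ω = false) :=
        pr_congr' p _ _ (fun ω => by tauto)
      rw [e1, e2] at heq
      have hCne : pr p (fun ω => W ω = w ∧ X ω = x) ≠ 0 := ne_of_gt hpos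
      have h1ne : pr p (fun ω => W ω = w ∧ X ω = x ∧ R ω = true) ≠ 0 := ne_of_gt hpos1
      rw [div_mul_div_comm, mul_comm (pr p fun ω => W ω = w ∧ X ω = x),
        mul_div_mul_left _ _ h1ne, div_eq_div_iff hCne hCne] at heq
      have h3 := mul_right_cancel₀ hCne heq
      exact (sum_ite_congr'' _ _ _ _ (fun ω => Iff.rfl) (fun ω _ => rfl)).trans
        (h3.symm.trans (sum_ite_congr'' _ _ _ _ (fun ω => Iff.rfl) (fun ω _ => rfl)))
    · have h0 := pr_zero_forall p hp _ hz.symm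
      have eL : (∑ ω, if W ω = w ∧ X ω = x ∧ R ω = true then p ω * q (Z ω) (X ω) else 0) = 0 := by
        refine Finset.sum_eq_zero fun ω _ => ?_
        by_cases hB : W ω = w ∧ X ω = x ∧ R ω = true
        · simp [hB, h0 ω ⟨hB.1, hB.2.1⟩]
        · simp [hB]
      have eR : (∑ ω, if W ω = w ∧ X ω = x ∧ R ω = false then p ω else 0) = 0 := by
        refine Finset.sum_eq_zero fun ω _ => ?_
        by_cases hB : W ω = w ∧ X ω = x ∧ R ω = false
        · simp [hB, h0 ω ⟨hB.1, hB.2.1⟩]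
        · simp [hB]
      rw [eL, eR]
  unfold ex
  calc ∑ ω, p ω * ((if R ω = true then (1:ℝ) else 0) * Y ω * q (Z ω) (X ω))
      = ∑ ω, if R ω = true then (p ω * Y ω) * q (Z ω) (X ω) else 0 := by
        refine Finset.sum_congr rfl fun ω _ => ?_
        by_cases hR : R ω = true <;> simp [hR] <;> ring
    _ = ∑ zx : 𝒵 × 𝒳, (∑ ω, if Z ω = zx.1 ∧ X ω = zx.2 ∧ R ω = true then p ω * Y ω else 0)
          * q zx.1 zx.2 :=
        fiber_if' Z X (fun ω => R ω = true) (fun ω => p ω * Y ω) q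
    _ = ∑ zx : 𝒵 × 𝒳, (∑ ω, if Z ω = zx.1 ∧ X ω = zx.2 ∧ R ω = true then
          p ω * h (W ω) (X ω) else 0) * q zx.1 zx.2 :=
        Finset.sum_congr rfl fun zx _ => by rw [key1]
    _ = ∑ ω, if R ω = true then (p ω * h (W ω) (X ω)) * q (Z ω) (X ω) else 0 :=
        (fiber_if' Z X (fun ω => R ω = true) (fun ω => p ω * h (W ω) (X ω)) q).symm
    _ = ∑ ω, if R ω = true then (p ω * q (Z ω) (X ω)) * h (W ω) (X ω) else 0 := by
        refine Finset.sum_congr rfl fun ω _ => ?_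
        by_cases hR : R ω = true <;> simp [hR] <;> ring
    _ = ∑ wx : 𝒲 × 𝒳, (∑ ω, if W ω = wx.1 ∧ X ω = wx.2 ∧ R ω = true then
          p ω * q (Z ω) (X ω) else 0) * h wx.1 wx.2 :=
        fiber_if' W X (fun ω => R ω = true) (fun ω => p ω * q (Z ω) (X ω)) h
    _ = ∑ wx : 𝒲 × 𝒳, (∑ ω, if W ω = wx.1 ∧ X ω = wx.2 ∧ R ω = false then p ω else 0)
          * h wx.1 wx.2 :=
        Finset.sum_congr rfl fun wx _ => by rw [key2]
    _ = ∑ ω, if R ω = false then p ω * h (W ω) (X ω) else 0 :=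
        (fiber_if' W X (fun ω => R ω = false) (fun ω => p ω) h).symm
    _ = ∑ ω, p ω * ((if R ω = false then (1:ℝ) else 0) * h (W ω) (X ω)) := by
        refine Finset.sum_congr rfl fun ω _ => ?_
        by_cases hR : R ω = false <;> simp [hR]
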